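/- arXiv:2205.15601 — 5 statements merged into one kernel-verified Lean document; each statement's English description precedes it below -/
import Mathlib

section
/- Let b ≥ 2 be an integer and let 𝒜 be a subset of ℕ_{≥1} × ℕ_{≥2}. Suppose that at least one of the following two conditions fails: (i) for all distinct pairs (i₁,j₁), (i₂,j₂) ∈ 𝒜 and all positive integers u, v one has i₁·u^{j₁} ≠ i₂·v^{j₂}; (ii) there is at most one pair (i,j) ∈ 𝒜 with j = 2. Then there exist infinite subsets T_{i,j} of the positive integers ((i,j) ∈ 𝒜) such that the set consisting of the number 1 together with the numbers Σ_{n ∈ T_{i,j}} 1/b^{i·n^j}, (i,j) ∈ 𝒜, is linearly dependent over ℚ. -/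
private lemma tsum_range' (g : ℕ → ℝ) (a : ℕ → ℕ) (ha : Function.Injective a) :
    ∑' x : Set.range a, g x = ∑' k, g (a k) := by
  rw [← (Equiv.ofInjective a ha).tsum_eq (fun x : Set.range a => g x)]
  simp

private lemma not_li_of_rel {ι : Type*} (f : ι → ℝ) (x y : ι) (hxy : x ≠ y) (c : ℚ)
    (h : f x = (c : ℝ) * f y) : ¬ LinearIndependent ℚ f := by
  classical
  intro hli
  have key := linearIndependent_iff'.mp hli {x, y}
    (fun z => if z = x then 1 else if z = y then -c else 0) ?_ x (by simp)
  · simp at key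
  · rw [Finset.sum_pair hxy]
    simp only [if_pos rfl, if_neg hxy.symm]
    rw [Rat.smul_def, Rat.smul_def, h]
    push_cast
    ring

/-- Core construction: if we can find two strictly monotone positive sequences whose
exponents agree up to a shift `s`, the family is linearly dependent. -/
private lemma core (b : ℕ) (hb : 2 ≤ b) (A : Set (ℕ × ℕ)) (p q : ℕ × ℕ)
    (hp : p ∈ A) (hq : q ∈ A) (hpq : p ≠ q)
    (a c : ℕ → ℕ) (ha : StrictMono a) (hc : StrictMono c)
    (ha1 : ∀ k, 0 < a k) (hc1 : ∀ k, 0 < c k)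
    (s : ℕ) (hrel : ∀ k, q.1 * (c k) ^ q.2 = p.1 * (a k) ^ p.2 + s) :
    ∃ T : ℕ → ℕ → Set ℕ,
      (∀ p ∈ A, (T p.1 p.2).Infinite) ∧
      (∀ p ∈ A, ∀ n ∈ T p.1 p.2, 0 < n) ∧
      ¬ LinearIndependent ℚ (fun x : Option ↥A =>
        x.elim (1 : ℝ) fun q =>
          ∑' n : T q.1.1 q.1.2, 1 / (b : ℝ) ^ (q.1.1 * (n : ℕ) ^ q.1.2)) := by
  classical
  refine ⟨fun i j => if (i, j) = p then Set.range a else if (i, j) = q then Set.range c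
    else Set.Ioi 0, ?_, ?_, ?_⟩
  · intro r _
    dsimp only
    rcases eq_or_ne (r.1, r.2) p with h1 | h1
    · rw [if_pos h1]; exact Set.infinite_range_of_injective ha.injective
    rcases eq_or_ne (r.1, r.2) q with h2 | h2
    · rw [if_neg h1, if_pos h2]; exact Set.infinite_range_of_injective hc.injective
    · rw [if_neg h1, if_neg h2]; exact Set.Ioi_infinite 0
  · intro r _ n hn
    dsimp only at hn
    rcases eq_or_ne (r.1, r.2) p with h1 | h1
    · rw [if_pos h1] at hn; obtain ⟨k, rfl⟩ := hn; exact ha1 k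
    rcases eq_or_ne (r.1, r.2) q with h2 | h2
    · rw [if_neg h1, if_pos h2] at hn; obtain ⟨k, rfl⟩ := hn; exact hc1 k
    · rw [if_neg h1, if_neg h2] at hn; exact hn
  · have hbR : (0 : ℝ) < (b : ℝ) := by positivity
    have hTp : (if ((p.1, p.2) : ℕ × ℕ) = p then Set.range a else
        if ((p.1, p.2) : ℕ × ℕ) = q then Set.range c else Set.Ioi 0) = Set.range a := by
      rw [if_pos rfl]
    have hTq : (if ((q.1, q.2) : ℕ × ℕ) = p then Set.range a else
        if ((q.1, q.2) : ℕ × ℕ) = q then Set.range c else Set.Ioi 0) = Set.range c := by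
      rw [if_neg (by simpa using hpq.symm), if_pos rfl]
    apply not_li_of_rel _ (Option.some ⟨q, hq⟩) (Option.some ⟨p, hp⟩)
      (by simp [Subtype.ext_iff, hpq.symm]) (1 / (b : ℚ) ^ s)
    simp only [Option.elim]
    rw [hTp, hTq]
    have e1 : ∑' (n : ↑(Set.range a)), (1 : ℝ) / (b : ℝ) ^ (p.1 * (n : ℕ) ^ p.2)
        = ∑' k, (1 : ℝ) / (b : ℝ) ^ (p.1 * (a k) ^ p.2) :=
      tsum_range' (fun t => (1 : ℝ) / (b : ℝ) ^ (p.1 * t ^ p.2)) a ha.injective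
    have e2 : ∑' (n : ↑(Set.range c)), (1 : ℝ) / (b : ℝ) ^ (q.1 * (n : ℕ) ^ q.2)
        = ∑' k, (1 : ℝ) / (b : ℝ) ^ (q.1 * (c k) ^ q.2) :=
      tsum_range' (fun t => (1 : ℝ) / (b : ℝ) ^ (q.1 * t ^ q.2)) c hc.injective
    rw [e1, e2]
    push_cast
    rw [← tsum_mul_left]
    congr 1
    ext k
    rw [hrel k, pow_add]
    field_simp

/-- Pell-type recursive sequence: `(pseq x y i₁ i₂ k) = (n_k, m_k)` with
`n' = x n + i₂ y m`, `m' = x m + i₁ y n`. -/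
private def pseq (x y i₁ i₂ : ℕ) : ℕ → ℕ × ℕ
  | 0 => (1, 1)
  | k + 1 =>
    let r := pseq x y i₁ i₂ k
    (x * r.1 + i₂ * y * r.2, x * r.2 + i₁ * y * r.1)

private lemma pseq_pos (x y i₁ i₂ : ℕ) (hx : 1 ≤ x) (hy : 1 ≤ y) (h1 : 1 ≤ i₁) (h2 : 1 ≤ i₂) :
    ∀ k, 1 ≤ (pseq x y i₁ i₂ k).1 ∧ 1 ≤ (pseq x y i₁ i₂ k).2 := by
  intro k
  induction k with
  | zero => exact ⟨le_refl 1, le_refl 1⟩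
  | succ k ih =>
    have hp1 : 0 < x * (pseq x y i₁ i₂ k).1 := Nat.mul_pos hx ih.1
    have hp2 : 0 < x * (pseq x y i₁ i₂ k).2 := Nat.mul_pos hx ih.2
    simp only [pseq]
    omega

private lemma pseq_mono (x y i₁ i₂ : ℕ) (hx : 1 ≤ x) (hy : 1 ≤ y) (h1 : 1 ≤ i₁) (h2 : 1 ≤ i₂) :
    StrictMono (fun k => (pseq x y i₁ i₂ k).1) ∧
    StrictMono (fun k => (pseq x y i₁ i₂ k).2) := by
  constructor <;>
  · apply strictMono_nat_of_lt_succ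
    intro k
    have hp := pseq_pos x y i₁ i₂ hx hy h1 h2 k
    have h3 : 0 < i₂ * y * (pseq x y i₁ i₂ k).2 := Nat.mul_pos (Nat.mul_pos h2 hy) hp.2
    have h4 : 0 < i₁ * y * (pseq x y i₁ i₂ k).1 := Nat.mul_pos (Nat.mul_pos h1 hy) hp.1
    have h5 : (pseq x y i₁ i₂ k).1 ≤ x * (pseq x y i₁ i₂ k).1 := Nat.le_mul_of_pos_left _ hx
    have h6 : (pseq x y i₁ i₂ k).2 ≤ x * (pseq x y i₁ i₂ k).2 := Nat.le_mul_of_pos_left _ hx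
    simp only [pseq]
    omega

private lemma pseq_invariant (x y i₁ i₂ : ℕ) (hx : (x : ℤ) ^ 2 = i₁ * i₂ * (y : ℤ) ^ 2 + 1) :
    ∀ k, (i₂ : ℤ) * ((pseq x y i₁ i₂ k).2 : ℤ) ^ 2 =
      (i₁ : ℤ) * ((pseq x y i₁ i₂ k).1 : ℤ) ^ 2 + ((i₂ : ℤ) - i₁) := by
  intro k
  induction k with
  | zero => simp [pseq]
  | succ k ih =>
    simp only [pseq]
    push_cast
    push_cast at ih
    linear_combination ((x : ℤ) ^ 2 - i₁ * i₂ * y ^ 2) * ih + ((i₂ : ℤ) - i₁) * hx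

/-- Case of two square exponents with non-square product of coefficients: Pell machinery. -/
private lemma caseB (b : ℕ) (hb : 2 ≤ b) (A : Set (ℕ × ℕ)) (p q : ℕ × ℕ)
    (hp : p ∈ A) (hq : q ∈ A) (hpq : p ≠ q) (hp1 : 1 ≤ p.1) (hq1 : 1 ≤ q.1)
    (hp2 : p.2 = 2) (hq2 : q.2 = 2) (hlt : p.1 < q.1) (hsq : ¬ IsSquare (p.1 * q.1)) :
    ∃ T : ℕ → ℕ → Set ℕ,
      (∀ p ∈ A, (T p.1 p.2).Infinite) ∧
      (∀ p ∈ A, ∀ n ∈ T p.1 p.2, 0 < n) ∧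
      ¬ LinearIndependent ℚ (fun x : Option ↥A =>
        x.elim (1 : ℝ) fun q =>
          ∑' n : T q.1.1 q.1.2, 1 / (b : ℝ) ^ (q.1.1 * (n : ℕ) ^ q.1.2)) := by
  have hZsq : ¬ IsSquare ((p.1 * q.1 : ℕ) : ℤ) := by
    rintro ⟨r, hr⟩
    refine hsq ⟨r.natAbs, ?_⟩
    have := congrArg Int.natAbs hr
    simpa [Int.natAbs_mul] using this
  obtain ⟨x, y, hxy, hy⟩ := Pell.exists_of_not_isSquare
    (by positivity : (0 : ℤ) < ((p.1 * q.1 : ℕ) : ℤ)) hZsq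
  -- pass to natural versions
  have hxZ : ((x.natAbs : ℤ)) ^ 2 = (p.1 : ℤ) * q.1 * (y.natAbs : ℤ) ^ 2 + 1 := by
    rw [← Int.abs_eq_natAbs, ← Int.abs_eq_natAbs, sq_abs, sq_abs]
    push_cast at hxy ⊢
    linarith
  have hxN : x.natAbs ^ 2 = p.1 * q.1 * y.natAbs ^ 2 + 1 := by exact_mod_cast hxZ
  have hy1 : 1 ≤ y.natAbs := Int.natAbs_pos.mpr hy
  have hx1 : 1 ≤ x.natAbs := by
    rcases Nat.eq_zero_or_pos x.natAbs with h0 | h0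
    · exfalso; rw [h0] at hxN; simp at hxN
    · exact h0
  set x' := x.natAbs
  set y' := y.natAbs
  have hmono := pseq_mono x' y' p.1 q.1 hx1 hy1 hp1 (le_trans hp1 hlt.le)
  have hpos := pseq_pos x' y' p.1 q.1 hx1 hy1 hp1 (le_trans hp1 hlt.le)
  apply core b hb A p q hp hq hpq
    (fun k => (pseq x' y' p.1 q.1 k).1) (fun k => (pseq x' y' p.1 q.1 k).2)
    hmono.1 hmono.2 (fun k => (hpos k).1) (fun k => (hpos k).2) (q.1 - p.1)
  intro k
  have hinv := pseq_invariant x' y' p.1 q.1 hxZ k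
  have hle : p.1 ≤ q.1 := hlt.le
  rw [hp2, hq2]
  zify [hle]
  linarith [hinv]

/-- **Theorem 3 (necessity).** Let `b ≥ 2` and let `A ⊆ ℕ_{≥1} × ℕ_{≥2}`. Suppose that at
least one of the following fails: (i) for all distinct `(i₁,j₁), (i₂,j₂) ∈ A` and all
positive integers `u, v` one has `i₁·u^{j₁} ≠ i₂·v^{j₂}`; (ii) there is at most one
`(i,j) ∈ A` with `j = 2`. Then there exist infinite sets `T i j` of positive integers such
that the family consisting of `1` together with the numbers `∑_{n ∈ T i j} 1/b^(i·n^j)`,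
`(i,j) ∈ A`, is linearly dependent over `ℚ`. -/
theorem theorem3_necessity (b : ℕ) (hb : 2 ≤ b) (A : Set (ℕ × ℕ))
    (hA : ∀ p ∈ A, 1 ≤ p.1 ∧ 2 ≤ p.2)
    (hfail : ¬ ((∀ p ∈ A, ∀ q ∈ A, p ≠ q →
        ∀ u v : ℕ, 0 < u → 0 < v → p.1 * u ^ p.2 ≠ q.1 * v ^ q.2) ∧
      (∀ p ∈ A, ∀ q ∈ A, p.2 = 2 → q.2 = 2 → p = q))) :
    ∃ T : ℕ → ℕ → Set ℕ,
      (∀ p ∈ A, (T p.1 p.2).Infinite) ∧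
      (∀ p ∈ A, ∀ n ∈ T p.1 p.2, 0 < n) ∧
      ¬ LinearIndependent ℚ (fun x : Option ↥A =>
        x.elim (1 : ℝ) fun q =>
          ∑' n : T q.1.1 q.1.2, 1 / (b : ℝ) ^ (q.1.1 * (n : ℕ) ^ q.1.2)) := by
  classical
  -- Case A helper: two distinct pairs whose exponent progressions meet.
  have caseA : ∀ p ∈ A, ∀ q ∈ A, p ≠ q → ∀ u v : ℕ, 0 < u → 0 < v →
      p.1 * u ^ p.2 = q.1 * v ^ q.2 →
      ∃ T : ℕ → ℕ → Set ℕ,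
        (∀ p ∈ A, (T p.1 p.2).Infinite) ∧
        (∀ p ∈ A, ∀ n ∈ T p.1 p.2, 0 < n) ∧
        ¬ LinearIndependent ℚ (fun x : Option ↥A =>
          x.elim (1 : ℝ) fun q =>
            ∑' n : T q.1.1 q.1.2, 1 / (b : ℝ) ^ (q.1.1 * (n : ℕ) ^ q.1.2)) := by
    intro p hp q hq hpq u v hu hv huv
    have hp2 : 2 ≤ p.2 := (hA p hp).2
    have hq2 : 2 ≤ q.2 := (hA q hq).2
    apply core b hb A p q hp hq hpq
      (fun k => u * (k + 1) ^ q.2) (fun k => v * (k + 1) ^ p.2)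
      ?_ ?_ (fun k => Nat.mul_pos hu (Nat.pow_pos (by omega)))
      (fun k => Nat.mul_pos hv (Nat.pow_pos (by omega))) 0
    · intro k
      have e1 : q.1 * (v * (k + 1) ^ p.2) ^ q.2 = (q.1 * v ^ q.2) * (k + 1) ^ (p.2 * q.2) := by
        rw [mul_pow, ← pow_mul]; ring
      have e2 : p.1 * (u * (k + 1) ^ q.2) ^ p.2 = (p.1 * u ^ p.2) * (k + 1) ^ (q.2 * p.2) := by
        rw [mul_pow, ← pow_mul]; ring
      rw [e1, e2, huv, Nat.mul_comm p.2 q.2]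
      omega
    · intro k l hkl
      have hpow : (k + 1) ^ q.2 < (l + 1) ^ q.2 := Nat.pow_lt_pow_left (by omega) (by omega)
      exact mul_lt_mul_of_pos_left hpow hu
    · intro k l hkl
      have hpow : (k + 1) ^ p.2 < (l + 1) ^ p.2 := Nat.pow_lt_pow_left (by omega) (by omega)
      exact mul_lt_mul_of_pos_left hpow hv
  rw [not_and_or] at hfail
  rcases hfail with h | h
  · push_neg at h
    obtain ⟨p, hp, q, hq, hpq, u, v, hu, hv, huv⟩ := h
    exact caseA p hp q hq hpq u v hu hv huv
  · push_neg at h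
    obtain ⟨p, hp, q, hq, hp2, hq2, hpq⟩ := h
    have hp1 : 1 ≤ p.1 := (hA p hp).1
    have hq1 : 1 ≤ q.1 := (hA q hq).1
    by_cases hsq : IsSquare (p.1 * q.1)
    · obtain ⟨k, hk⟩ := hsq
      have hk1 : 0 < k := by nlinarith
      refine caseA p hp q hq hpq q.1 k hq1 hk1 ?_
      rw [hp2, hq2]
      calc p.1 * q.1 ^ 2 = (p.1 * q.1) * q.1 := by ring
        _ = (k * k) * q.1 := by rw [hk]
        _ = q.1 * k ^ 2 := by ring
    · have hne : p.1 ≠ q.1 := by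
        intro he
        exact hpq (Prod.ext he (hp2.trans hq2.symm))
      rcases Nat.lt_or_ge p.1 q.1 with hlt | hge
      · exact caseB b hb A p q hp hq hpq hp1 hq1 hp2 hq2 hlt hsq
      · have hlt2 : q.1 < p.1 := by omega
        exact caseB b hb A q p hq hp hpq.symm hq1 hp1 hq2 hp2 hlt2
          (by rwa [Nat.mul_comm] at hsq)
end

section
/- Let b ≥ 2 be an integer, let (i₁,j₁) and (i₂,j₂) be pairs of integers with i₁, i₂ ≥ 1 and j₁, j₂ ≥ 2, and suppose i₁·u^{j₁} = i₂·v^{j₂} for some positive integers u and v. Define T₁ := {u·2^{j₂·m} : m ∈ ℕ_{≥1}} and T₂ := {v·2^{j₁·m} : m ∈ ℕ_{≥1}}. Then Σ_{n ∈ T₁} 1/b^{i₁·n^{j₁}} = Σ_{n ∈ T₂} 1/b^{i₂·n^{j₂}}. -/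
/-- Reindexing equivalence: `{m // 1 ≤ m} ≃ {n // ∃ m, 1 ≤ m ∧ n = c * 2^(k*m)}`. -/
noncomputable def auxEquiv (c k : ℕ) (hc : 0 < c) (hk : 0 < k) :
    {m : ℕ // 1 ≤ m} ≃ {n : ℕ // ∃ m : ℕ, 1 ≤ m ∧ n = c * 2 ^ (k * m)} :=
  Equiv.ofBijective (fun m => ⟨c * 2 ^ (k * m.1), m.1, m.2, rfl⟩) (by
    constructor
    · rintro ⟨m₁, hm₁⟩ ⟨m₂, hm₂⟩ hmm
      simp only [Subtype.mk.injEq] at hmm ⊢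
      have h2 : (2:ℕ) ^ (k * m₁) = 2 ^ (k * m₂) :=
        Nat.eq_of_mul_eq_mul_left hc hmm
      have := Nat.pow_right_injective (le_refl 2) h2
      exact Nat.eq_of_mul_eq_mul_left hk this
    · rintro ⟨n, m, hm, rfl⟩
      exact ⟨⟨m, hm⟩, rfl⟩)

/-- If `i₁·u^{j₁} = i₂·v^{j₂}` for positive integers `u, v`, then with
`T₁ = {u·2^(j₂·m) : m ≥ 1}` and `T₂ = {v·2^(j₁·m) : m ≥ 1}` one has
`∑_{n ∈ T₁} 1/b^(i₁·n^{j₁}) = ∑_{n ∈ T₂} 1/b^(i₂·n^{j₂})`. -/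
theorem dependence_from_condition_i_failing
    (b i₁ i₂ j₁ j₂ u v : ℕ) (hb : 2 ≤ b)
    (hi₁ : 1 ≤ i₁) (hi₂ : 1 ≤ i₂) (hj₁ : 2 ≤ j₁) (hj₂ : 2 ≤ j₂)
    (hu : 0 < u) (hv : 0 < v)
    (h : i₁ * u ^ j₁ = i₂ * v ^ j₂) :
    (∑' n : {n : ℕ // ∃ m : ℕ, 1 ≤ m ∧ n = u * 2 ^ (j₂ * m)},
        1 / (b : ℝ) ^ (i₁ * (n : ℕ) ^ j₁)) =
      ∑' n : {n : ℕ // ∃ m : ℕ, 1 ≤ m ∧ n = v * 2 ^ (j₁ * m)},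
        1 / (b : ℝ) ^ (i₂ * (n : ℕ) ^ j₂) := by
  have hj₁' : 0 < j₁ := by omega
  have hj₂' : 0 < j₂ := by omega
  rw [← (auxEquiv u j₂ hu hj₂').tsum_eq, ← (auxEquiv v j₁ hv hj₁').tsum_eq]
  apply tsum_congr
  intro m
  simp only [auxEquiv, Equiv.ofBijective_apply]
  congr 1
  have key : i₁ * (u * 2 ^ (j₂ * m.1)) ^ j₁ = i₂ * (v * 2 ^ (j₁ * m.1)) ^ j₂ := by
    rw [mul_pow, mul_pow, ← pow_mul, ← pow_mul, ← mul_assoc, ← mul_assoc, h]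
    ring_nf
  exact congrArg (fun e : ℕ => (b : ℝ) ^ e) key
end

section
/- Let b ≥ 2 be an integer and let i₁, i₂ be positive integers such that i₁·i₂ is not a perfect square. Let 𝒮 := {(x,y) ∈ ℕ_{≥1} × ℕ_{≥1} : x² − i₁·i₂·y² = 1}, and set T₁ := {x : (x,y) ∈ 𝒮 for some y} and T₂ := {i₁·y : (x,y) ∈ 𝒮 for some x}. Then T₁ and T₂ are infinite and Σ_{n ∈ T₁} 1/b^{i₁·n²} = (1/b^{i₁}) · Σ_{n ∈ T₂} 1/b^{i₂·n²}; in particular, the numbers 1, Σ_{n ∈ T₁} 1/b^{i₁·n²}, Σ_{n ∈ T₂} 1/b^{i₂·n²} are linearly dependent over ℚ. -/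
private lemma yOf_eq {D x y : ℕ} (hD : 0 < D) (hx : x ^ 2 = D * y ^ 2 + 1) :
    Nat.sqrt ((x ^ 2 - 1) / D) = y := by
  have h : x ^ 2 - 1 = D * y ^ 2 := by omega
  rw [h, Nat.mul_div_cancel_left _ hD, Nat.sqrt_eq']

/-- If `i₁·i₂` is not a perfect square, then with `𝒮` the set of positive solutions of the
Pell equation `x² − i₁i₂y² = 1`, `T₁ = {x : (x,y) ∈ 𝒮}` and `T₂ = {i₁·y : (x,y) ∈ 𝒮}`, the
sets `T₁`, `T₂` are infinite, `∑_{n ∈ T₁} 1/b^(i₁·n²) = (1/b^{i₁})·∑_{n ∈ T₂} 1/b^(i₂·n²)`,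
and in particular the numbers `1`, `∑_{n ∈ T₁} 1/b^(i₁·n²)`, `∑_{n ∈ T₂} 1/b^(i₂·n²)` are
linearly dependent over `ℚ`. -/
theorem dependence_from_condition_ii_failing
    (b i₁ i₂ : ℕ) (hb : 2 ≤ b) (hi₁ : 1 ≤ i₁) (hi₂ : 1 ≤ i₂)
    (hsq : ¬ IsSquare (i₁ * i₂)) :
    (({x : ℕ | ∃ y : ℕ, 0 < x ∧ 0 < y ∧ x ^ 2 = i₁ * i₂ * y ^ 2 + 1} : Set ℕ).Infinite) ∧
    (({n : ℕ | ∃ x y : ℕ, 0 < x ∧ 0 < y ∧ x ^ 2 = i₁ * i₂ * y ^ 2 + 1 ∧ n = i₁ * y} :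
        Set ℕ).Infinite) ∧
    ((∑' n : {x : ℕ | ∃ y : ℕ, 0 < x ∧ 0 < y ∧ x ^ 2 = i₁ * i₂ * y ^ 2 + 1},
        1 / (b : ℝ) ^ (i₁ * (n : ℕ) ^ 2)) =
      (1 / (b : ℝ) ^ i₁) *
        ∑' n : {n : ℕ | ∃ x y : ℕ, 0 < x ∧ 0 < y ∧ x ^ 2 = i₁ * i₂ * y ^ 2 + 1 ∧ n = i₁ * y},
          1 / (b : ℝ) ^ (i₂ * (n : ℕ) ^ 2)) ∧
    ¬ LinearIndependent ℚ
      ![(1 : ℝ),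
        ∑' n : {x : ℕ | ∃ y : ℕ, 0 < x ∧ 0 < y ∧ x ^ 2 = i₁ * i₂ * y ^ 2 + 1},
          1 / (b : ℝ) ^ (i₁ * (n : ℕ) ^ 2),
        ∑' n : {n : ℕ | ∃ x y : ℕ, 0 < x ∧ 0 < y ∧ x ^ 2 = i₁ * i₂ * y ^ 2 + 1 ∧ n = i₁ * y},
          1 / (b : ℝ) ^ (i₂ * (n : ℕ) ^ 2)] := by
  classical
  have hD0 : 0 < i₁ * i₂ := Nat.mul_pos hi₁ hi₂
  have hDZ : (0 : ℤ) < ((i₁ * i₂ : ℕ) : ℤ) := by exact_mod_cast hD0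
  have hsqZ : ¬ IsSquare (((i₁ * i₂ : ℕ) : ℤ)) := by
    rwa [Int.isSquare_natCast_iff]
  obtain ⟨a, ha⟩ := Pell.IsFundamental.exists_of_not_isSquare hDZ hsqZ
  -- the sequence of solutions a^(k+1)
  set sol : ℕ → Pell.Solution₁ ((i₁ * i₂ : ℕ) : ℤ) := fun k => a ^ ((k : ℤ) + 1) with hsol
  have hx : ∀ k, 0 < (sol k).x := fun k => Pell.Solution₁.x_zpow_pos ha.x_pos _
  have hy : ∀ k, 0 < (sol k).y := fun k =>
    Pell.Solution₁.y_zpow_pos ha.x_pos ha.2.1 (by positivity)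
  set X : ℕ → ℕ := fun k => ((sol k).x).toNat with hX
  set Y : ℕ → ℕ := fun k => ((sol k).y).toNat with hY
  have hXY : ∀ k, 0 < X k ∧ 0 < Y k ∧ (X k) ^ 2 = i₁ * i₂ * (Y k) ^ 2 + 1 := by
    intro k
    have h1 := (sol k).prop
    have hx' := hx k
    have hy' := hy k
    refine ⟨by simpa [hX] using hx', by simpa [hY] using hy', ?_⟩
    have hXx : ((X k : ℤ)) = (sol k).x := Int.toNat_of_nonneg hx'.le
    have hYy : ((Y k : ℤ)) = (sol k).y := Int.toNat_of_nonneg hy'.le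
    have : ((X k : ℤ)) ^ 2 = (i₁ * i₂ : ℕ) * (Y k : ℤ) ^ 2 + 1 := by
      rw [hXx, hYy]; linarith [h1]
    exact_mod_cast this
  have hYinj : Function.Injective Y := by
    intro k l hkl
    have : (sol k).y = (sol l).y := by
      have := congrArg (fun n : ℕ => (n : ℤ)) hkl
      simpa [hY, Int.toNat_of_nonneg (hy k).le, Int.toNat_of_nonneg (hy l).le] using this
    have := ha.y_strictMono.injective this
    omega
  have hXinj : Function.Injective X := by
    intro k l hkl
    have h1 := (hXY k).2.2
    have h2 := (hXY l).2.2
    rw [hkl] at h1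
    have hyy : Y k = Y l := by
      have : (Y k) ^ 2 = (Y l) ^ 2 := by
        have := h2.symm.trans h1
        exact Nat.eq_of_mul_eq_mul_left hD0 (by omega)
      exact Nat.pow_left_injective (by norm_num) this
    exact hYinj hyy
  have hT₁ : (({x : ℕ | ∃ y : ℕ, 0 < x ∧ 0 < y ∧ x ^ 2 = i₁ * i₂ * y ^ 2 + 1} : Set ℕ)).Infinite :=
    Set.infinite_of_injective_forall_mem hXinj
      (fun k => ⟨Y k, (hXY k).1, (hXY k).2.1, (hXY k).2.2⟩)
  have hT₂ : (({n : ℕ | ∃ x y : ℕ, 0 < x ∧ 0 < y ∧ x ^ 2 = i₁ * i₂ * y ^ 2 + 1 ∧ n = i₁ * y} :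
      Set ℕ)).Infinite :=
    Set.infinite_of_injective_forall_mem
      (f := fun k => i₁ * Y k)
      (fun k l hkl => hYinj (Nat.eq_of_mul_eq_mul_left hi₁ hkl))
      (fun k => ⟨X k, Y k, (hXY k).1, (hXY k).2.1, (hXY k).2.2, rfl⟩)
  -- the bijection between T₁ and T₂
  have hbpos : (0 : ℝ) < (b : ℝ) := by positivity
  set f : ({x : ℕ | ∃ y : ℕ, 0 < x ∧ 0 < y ∧ x ^ 2 = i₁ * i₂ * y ^ 2 + 1} : Set ℕ) →
      ({n : ℕ | ∃ x y : ℕ, 0 < x ∧ 0 < y ∧ x ^ 2 = i₁ * i₂ * y ^ 2 + 1 ∧ n = i₁ * y} : Set ℕ) :=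
    fun t => ⟨i₁ * Nat.sqrt (((t : ℕ) ^ 2 - 1) / (i₁ * i₂)), by
      obtain ⟨y, hx0, hy0, hxy⟩ := t.2
      rw [yOf_eq hD0 hxy]
      exact ⟨t, y, hx0, hy0, hxy, rfl⟩⟩ with hf
  have hfbij : Function.Bijective f := by
    constructor
    · rintro ⟨x₁, hx₁⟩ ⟨x₂, hx₂⟩ h
      obtain ⟨y₁, hx10, hy10, hxy1⟩ := hx₁
      obtain ⟨y₂, hx20, hy20, hxy2⟩ := hx₂
      have h' : i₁ * y₁ = i₁ * y₂ := by
        have := congrArg Subtype.val h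
        simpa [hf, yOf_eq hD0 hxy1, yOf_eq hD0 hxy2] using this
      have hyy : y₁ = y₂ := Nat.eq_of_mul_eq_mul_left hi₁ h'
      subst hyy
      have : x₁ ^ 2 = x₂ ^ 2 := by omega
      exact Subtype.ext (Nat.pow_left_injective (by norm_num) this)
    · rintro ⟨n, x, y, hx0, hy0, hxy, rfl⟩
      refine ⟨⟨x, y, hx0, hy0, hxy⟩, ?_⟩
      apply Subtype.ext
      simp [hf, yOf_eq hD0 hxy]
  set e := Equiv.ofBijective f hfbij with he
  have key : (∑' n : {x : ℕ | ∃ y : ℕ, 0 < x ∧ 0 < y ∧ x ^ 2 = i₁ * i₂ * y ^ 2 + 1},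
        1 / (b : ℝ) ^ (i₁ * (n : ℕ) ^ 2)) =
      (1 / (b : ℝ) ^ i₁) *
        ∑' n : {n : ℕ | ∃ x y : ℕ, 0 < x ∧ 0 < y ∧ x ^ 2 = i₁ * i₂ * y ^ 2 + 1 ∧ n = i₁ * y},
          1 / (b : ℝ) ^ (i₂ * (n : ℕ) ^ 2) := by
    rw [← e.tsum_eq (fun n => 1 / (b : ℝ) ^ (i₂ * (n : ℕ) ^ 2)), ← tsum_mul_left]
    refine tsum_congr fun t => ?_
    obtain ⟨y, hx0, hy0, hxy⟩ := t.2
    have hev : ((e t : ℕ)) = i₁ * y := by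
      simp [he, hf, Equiv.ofBijective_apply, yOf_eq hD0 hxy]
    rw [hev]
    have hexp : i₁ * (t : ℕ) ^ 2 = i₂ * (i₁ * y) ^ 2 + i₁ := by
      have : i₂ * (i₁ * y) ^ 2 = i₁ * (i₁ * i₂ * y ^ 2) := by ring
      rw [this, hxy]; ring
    rw [hexp, pow_add]
    field_simp
  refine ⟨hT₁, hT₂, key, ?_⟩
  intro hli
  have hz := Fintype.linearIndependent_iff.mp hli
    ![0, 1, -((1 : ℚ) / (b : ℚ) ^ i₁)] ?_ 1
  · simp at hz
  · rw [Fin.sum_univ_three]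
    simp only [Matrix.cons_val_zero, Matrix.cons_val_one, Matrix.head_cons,
      Matrix.cons_val_two, Matrix.tail_cons]
    rw [Rat.smul_def, Rat.smul_def, Rat.smul_def]
    push_cast
    rw [key]
    ring
end

section
/- Let k ≥ 2, u ≥ 1 and v ≠ 0 be integers. Then there are infinitely many prime numbers p such that the congruence u·X^k + v ≡ p (mod p²) has an integer solution X. -/
/-!
Hensel's lemma one step deep: if `p ∣ f a` and `p ∤ f' a`, then `f (a + t p) ≡ f a + f' a · t p`
(mod `p²`) can be made `≡ 0` by a suitable `t`. Applied to `f = u X^k + v - p`, it suffices to find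
infinitely many primes `p` and integers `a` with `p ∣ u a^k + v` and `p ∤ u k a`. Taking `a = v Q`
with `Q = k u v (N + 3)!` gives `u a^k + v = v (u v^(k-1) Q^(k-1) · Q + 1)`, and every prime factor of
the second factor is prime to `Q`, hence to `k`, `u`, `v` and to every number up to `N + 3`.
-/

open Polynomial

theorem exists_sq_dvd_eval_of_dvd_eval {R : Type*} [CommRing R] {f : R[X]} {n a : R}
    (hcop : IsCoprime n (f.derivative.eval a)) (hdvd : n ∣ f.eval a) :
    ∃ x, n ^ 2 ∣ f.eval x := by
  obtain ⟨c, hc⟩ := hdvd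
  obtain ⟨s, t, hst⟩ := hcop
  obtain ⟨K, hK⟩ := binomExpansion f a (-(c * t * n))
  exact ⟨a + -(c * t * n), c * s + K * c ^ 2 * t ^ 2,
    by linear_combination hK + hc - n * c * hst⟩

theorem Int.exists_prime_dvd_mul_add_one {w Q : ℤ} (hw : w ≠ 0) (hQ : 3 ≤ |Q|) :
    ∃ p : ℕ, p.Prime ∧ (p : ℤ) ∣ w * Q + 1 ∧ IsCoprime (p : ℤ) Q := by
  have hne : (w * Q + 1).natAbs ≠ 1 := by
    rw [Ne, Int.natAbs_eq_iff]
    rintro (h | h)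
    · have : w * Q = 0 := by push_cast at h; linarith
      simp_all
    · have hwQ : w * Q = -2 := by push_cast at h; linarith
      have habs : |w| * |Q| = 2 := by rw [← abs_mul, hwQ]; rfl
      nlinarith [Int.one_le_abs hw]
  obtain ⟨p, hp, hpM⟩ := Nat.exists_prime_and_dvd hne
  replace hpM : (p : ℤ) ∣ w * Q + 1 := Int.natCast_dvd.mpr hpM
  refine ⟨p, hp, hpM, (Nat.prime_iff_prime_int.mp hp).coprime_iff_not_dvd.mpr fun hpQ => ?_⟩
  have hp1 : (p : ℤ) ∣ 1 := (dvd_add_right (hpQ.mul_left w)).mp hpM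
  exact hp.one_lt.ne' (by exact_mod_cast Int.eq_one_of_dvd_one (by positivity) hp1)

theorem exists_prime_gt_dvd_mul_pow_add {k : ℕ} {u v : ℤ} (hk : 0 < k) (hu : u ≠ 0) (hv : v ≠ 0)
    (N : ℕ) : ∃ p : ℕ, N < p ∧ p.Prime ∧
      ∃ a : ℤ, (p : ℤ) ∣ u * a ^ k + v ∧ IsCoprime (p : ℤ) (u * k * a ^ (k - 1)) := by
  set Q : ℤ := k * u * v * (N + 3).factorial
  have hQ : 3 ≤ |Q| := by
    have hfact : (3 : ℤ) ≤ (N + 3).factorial := by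
      exact_mod_cast (Nat.self_le_factorial _).trans' (by omega)
    have hkuv : 1 ≤ |(k : ℤ) * u * v| := Int.one_le_abs (by positivity)
    rw [abs_mul _ ((N + 3).factorial : ℤ), Nat.abs_cast]
    nlinarith
  have hw : u * v ^ (k - 1) * Q ^ (k - 1) ≠ 0 := by positivity
  obtain ⟨p, hp, hpM, hpQ⟩ := Int.exists_prime_dvd_mul_add_one hw hQ
  have hpk : IsCoprime (p : ℤ) k :=
    hpQ.of_isCoprime_of_dvd_right ⟨u * v * (N + 3).factorial, by ring⟩
  have hpu : IsCoprime (p : ℤ) u :=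
    hpQ.of_isCoprime_of_dvd_right ⟨k * v * (N + 3).factorial, by ring⟩
  have hpv : IsCoprime (p : ℤ) v :=
    hpQ.of_isCoprime_of_dvd_right ⟨k * u * (N + 3).factorial, by ring⟩
  have hpN : N + 3 < p := by
    by_contra! hle
    have hdvd : (p : ℤ) ∣ (N + 3).factorial := by exact_mod_cast hp.dvd_factorial.mpr hle
    exact (Nat.prime_iff_prime_int.mp hp).not_isUnit
      (hpQ.isUnit_of_dvd' dvd_rfl (hdvd.mul_left _))
  refine ⟨p, by omega, hp, v * Q, ?_, (hpu.mul_right hpk).mul_right ((hpv.mul_right hpQ).pow_right)⟩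
  have hfactor : u * (v * Q) ^ k + v = v * (u * v ^ (k - 1) * Q ^ (k - 1) * Q + 1) := by
    obtain ⟨j, rfl⟩ : ∃ j, k = j + 1 := ⟨k - 1, by omega⟩
    simp only [Nat.add_sub_cancel]
    ring
  exact hfactor ▸ hpM.mul_left v

/-- **Lemma 1.** Let `k ≥ 2`, `u ≥ 1` and `v ≠ 0` be integers. Then there are infinitely
many primes `p` such that the congruence `u·X^k + v ≡ p (mod p²)` has an integer
solution `X`. -/
theorem lemma1 (k : ℕ) (u v : ℤ) (hk : 2 ≤ k) (hu : 1 ≤ u) (hv : v ≠ 0) :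
    {p : ℕ | p.Prime ∧ ∃ X : ℤ, ((p : ℤ) ^ 2) ∣ (u * X ^ k + v - p)}.Infinite := by
  refine Set.infinite_of_forall_exists_gt fun N => ?_
  obtain ⟨p, hpN, hp, a, hdvd, hcop⟩ :=
    exists_prime_gt_dvd_mul_pow_add (by omega : 0 < k) (by omega : u ≠ 0) hv N
  have hdvd' : (p : ℤ) ∣ u * a ^ k + v - p := dvd_sub hdvd dvd_rfl
  obtain ⟨X, hX⟩ := exists_sq_dvd_eval_of_dvd_eval
    (f := C u * X ^ k + C (v - p)) (n := (p : ℤ)) (a := a)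
    (by simpa [derivative_X_pow, mul_assoc] using hcop) (by simpa [add_sub_assoc] using hdvd')
  exact ⟨p, ⟨hp, X, by simpa [add_sub_assoc] using hX⟩, hpN⟩
end

section
/- Let m ≥ 2 be an integer and let 𝒜 := {(i,j) : 1 ≤ i ≤ m, 2 ≤ j ≤ m}. Fix (i₀,j₀) ∈ 𝒜 and coprime positive integers d and h. Then for every sufficiently large integer N there exist infinitely many prime numbers q with q ≡ h (mod d) such that for every integer u with 1 ≤ u ≤ N−1, neither i₀·q^{j₀} + u nor i₀·q^{j₀} − u belongs to the set {i·k^j : k ∈ ℕ_{≥1}, (i,j) ∈ 𝒜}. -/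
/-- Binomial expansion mod `p²`. -/
lemma one_add_pow_aux (p : ℤ) (n : ℕ) : ∃ K : ℤ, (1 + p) ^ n = 1 + n * p + K * p ^ 2 := by
  induction n with
  | zero => exact ⟨0, by norm_num⟩
  | succ n ih =>
    obtain ⟨K, hK⟩ := ih
    exact ⟨K + n + K * p, by rw [pow_succ, hK]; push_cast; ring⟩

/-- Coprimality only depends on the residue class. -/
lemma coprime_of_modEq_aux {a b n : ℕ} (h : a ≡ b [MOD n]) (hb : b.Coprime n) :
    a.Coprime n := by
  have h1 : Nat.gcd a n = Nat.gcd b n := by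
    rw [Nat.gcd_comm a n, Nat.gcd_rec n a, Nat.gcd_comm b n, Nat.gcd_rec n b, h]
  unfold Nat.Coprime at *
  rw [h1]
  exact hb

/-- Key existence lemma: a fresh prime `P` (coprime to `M`) and a residue `r` such that
`i₀ r^{j₀} + ε u` has `P`-adic valuation exactly one. -/
lemma keyA (i₀ j₀ : ℕ) (hi₀ : 1 ≤ i₀) (hj₀ : 2 ≤ j₀) (M : ℕ) (hM : 2 ≤ M)
    (hiM : i₀ ∣ M) (hjM : j₀ ∣ M) (u : ℕ) (hu : 1 ≤ u) (ε : ℤ) (hε : ε = 1 ∨ ε = -1) :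
    ∃ P r : ℕ, P.Prime ∧ ¬ P ∣ M ∧ ¬ P ∣ r ∧
      (P : ℤ) ∣ ((i₀ : ℤ) * (r : ℤ) ^ j₀ + ε * u) ∧
      ¬ ((P : ℤ) ^ 2 ∣ ((i₀ : ℤ) * (r : ℤ) ^ j₀ + ε * u)) := by
  set t : ℕ := M * u with ht
  set s : ℕ := u * t with hs
  set T : ℕ := i₀ * u ^ (j₀ - 1) * t ^ j₀ with hT
  have ht2 : 2 ≤ t := le_trans hM (Nat.le_mul_of_pos_right M hu)
  have hT4 : 4 ≤ T := by
    have h1 : t ^ 2 ≤ t ^ j₀ := Nat.pow_le_pow_right (by omega) hj₀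
    have h2 : 4 ≤ t ^ 2 := by nlinarith
    calc 4 ≤ t ^ j₀ := le_trans h2 h1
    _ ≤ i₀ * u ^ (j₀ - 1) * t ^ j₀ := Nat.le_mul_of_pos_left _ (by positivity)
  set g : ℤ := (T : ℤ) + ε with hg
  have hg2 : 2 ≤ g := by rcases hε with rfl | rfl <;> simp [hg] <;> omega
  set P : ℕ := g.toNat.minFac with hP
  have hgtoNat : (g.toNat : ℤ) = g := Int.toNat_of_nonneg (by omega)
  have hPprime : P.Prime := Nat.minFac_prime (by omega)
  have hPg : (P : ℤ) ∣ g := by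
    rw [← hgtoNat]; exact_mod_cast Nat.minFac_dvd _
  -- P divides no divisor of T
  have hPT : ∀ x : ℕ, x ∣ T → ¬ P ∣ x := by
    intro x hx hPx
    have h1 : (P : ℤ) ∣ (T : ℤ) := Int.natCast_dvd_natCast.mpr (hPx.trans hx)
    have h2 : (P : ℤ) ∣ ε := by
      have : ε = g - T := by rw [hg]; ring
      rw [this]; exact dvd_sub hPg h1
    rcases hε with rfl | rfl
    · exact Nat.Prime.one_lt hPprime |>.ne' (by exact_mod_cast Int.eq_one_of_dvd_one (by positivity) h2)
    · have : (P : ℤ) ∣ 1 := (dvd_neg.mpr h2)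
      exact Nat.Prime.one_lt hPprime |>.ne' (by exact_mod_cast Int.eq_one_of_dvd_one (by positivity) this)
  have hPi₀ : ¬ P ∣ i₀ := hPT i₀ ⟨u ^ (j₀ - 1) * t ^ j₀, by ring⟩
  have hPu : ¬ P ∣ u := by
    have h1 : u ∣ u ^ (j₀ - 1) := dvd_pow_self u (by omega)
    have h2 : u ^ (j₀ - 1) ∣ T := ⟨i₀ * t ^ j₀, by ring⟩
    exact hPT u (h1.trans h2)
  have hPt : ¬ P ∣ t := by
    have h1 : t ∣ t ^ j₀ := dvd_pow_self t (by omega)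
    have h2 : t ^ j₀ ∣ T := ⟨i₀ * u ^ (j₀ - 1), by ring⟩
    exact hPT t (h1.trans h2)
  have hPM : ¬ P ∣ M := fun hd => hPt (hd.trans ⟨u, rfl⟩)
  have hPj₀ : ¬ P ∣ j₀ := fun hd => hPM (hd.trans hjM)
  have hPs : ¬ P ∣ s := fun hd => by
    rcases (Nat.Prime.dvd_mul hPprime).mp hd with h | h
    · exact hPu h
    · exact hPt h
  -- the key identity : u * g = i₀ * s^{j₀} + ε * u
  have hid : (u : ℤ) * g = (i₀ : ℤ) * (s : ℤ) ^ j₀ + ε * u := by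
    have hupow : (u : ℤ) * (u : ℤ) ^ (j₀ - 1) = (u : ℤ) ^ j₀ := by
      rw [← pow_succ']; congr 1; omega
    rw [hg, hT, hs, ht]
    push_cast
    calc (u:ℤ) * ((i₀:ℤ) * (u:ℤ)^(j₀-1) * ((M:ℤ)*(u:ℤ))^j₀ + ε)
        = (i₀:ℤ) * (((u:ℤ) * (u:ℤ)^(j₀-1)) * ((M:ℤ)*(u:ℤ))^j₀) + ε * u := by ring
      _ = (i₀:ℤ) * ((u:ℤ) * ((M:ℤ)*(u:ℤ)))^j₀ + ε * (u:ℤ) := by rw [hupow]; ring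
  have hPA : (P : ℤ) ∣ ((i₀ : ℤ) * (s : ℤ) ^ j₀ + ε * u) := by
    rw [← hid]; exact hPg.mul_left _
  by_cases hP2 : (P : ℤ) ^ 2 ∣ ((i₀ : ℤ) * (s : ℤ) ^ j₀ + ε * u)
  · -- lift: replace s by r = s * (1 + P)
    obtain ⟨K, hK⟩ := one_add_pow_aux (P : ℤ) j₀
    refine ⟨P, s * (1 + P), hPprime, hPM, ?_, ?_, ?_⟩
    · intro hd
      rcases (Nat.Prime.dvd_mul hPprime).mp hd with h | h
      · exact hPs h
      · have h1 : P ∣ P + 1 := by rwa [Nat.add_comm] at h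
        have h2 : P ∣ 1 := (Nat.dvd_add_right (dvd_refl P)).mp h1
        have := Nat.le_of_dvd one_pos h2
        have := hPprime.two_le
        omega
    · have hrw : (i₀ : ℤ) * ((s * (1 + P) : ℕ) : ℤ) ^ j₀ + ε * u
          = ((i₀ : ℤ) * (s:ℤ) ^ j₀ + ε * u) + (i₀:ℤ) * (s:ℤ)^j₀ * (j₀ * P) 
            + (i₀:ℤ) * (s:ℤ)^j₀ * K * P^2 := by
        push_cast
        rw [mul_pow, hK]; ring
      rw [hrw]
      refine dvd_add (dvd_add ((dvd_pow_self (P:ℤ) two_ne_zero).trans hP2) ?_) ?_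
      · exact ⟨(i₀:ℤ) * (s:ℤ)^j₀ * j₀, by push_cast; ring⟩
      · exact ⟨(i₀:ℤ) * (s:ℤ)^j₀ * K * P, by ring⟩
    · intro hcon
      have hrw : (i₀ : ℤ) * ((s * (1 + P) : ℕ) : ℤ) ^ j₀ + ε * u
          = ((i₀ : ℤ) * (s:ℤ) ^ j₀ + ε * u) + (i₀:ℤ) * (s:ℤ)^j₀ * (j₀ * P)
            + (i₀:ℤ) * (s:ℤ)^j₀ * K * P^2 := by
        push_cast
        rw [mul_pow, hK]; ring
      rw [hrw] at hcon
      have h3 : (P:ℤ)^2 ∣ (i₀:ℤ) * (s:ℤ)^j₀ * (j₀ * P) := by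
        have h4 : (P:ℤ)^2 ∣ (i₀:ℤ) * (s:ℤ)^j₀ * K * P^2 := ⟨_, mul_comm _ _⟩
        have := dvd_sub (dvd_sub hcon h4) hP2
        simpa using (by
          have heq : ((i₀ : ℤ) * (s:ℤ) ^ j₀ + ε * u) + (i₀:ℤ) * (s:ℤ)^j₀ * (j₀ * P)
            + (i₀:ℤ) * (s:ℤ)^j₀ * K * P^2 - ((i₀:ℤ) * (s:ℤ)^j₀ * K * P^2)
            - ((i₀ : ℤ) * (s:ℤ) ^ j₀ + ε * u) = (i₀:ℤ) * (s:ℤ)^j₀ * (j₀ * P) := by ring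
          rw [heq] at this
          exact this)
      have hPne : (P : ℤ) ≠ 0 := by exact_mod_cast hPprime.ne_zero
      have h5 : (P:ℤ) ∣ (i₀:ℤ) * (s:ℤ)^j₀ * (j₀:ℤ) := by
        have h6 : (i₀:ℤ) * (s:ℤ)^j₀ * (j₀ * P) = ((i₀:ℤ) * (s:ℤ)^j₀ * j₀) * P := by ring
        rw [h6, pow_two] at h3
        exact (mul_dvd_mul_iff_right hPne).mp h3
      have hPZ : Prime (P : ℤ) := Nat.prime_iff_prime_int.mp hPprime
      rcases hPZ.dvd_mul.mp h5 with h7 | h7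
      · rcases hPZ.dvd_mul.mp h7 with h8 | h8
        · exact hPi₀ (Int.natCast_dvd_natCast.mp h8)
        · exact hPs (Int.natCast_dvd_natCast.mp (hPZ.dvd_of_dvd_pow h8))
      · exact hPj₀ (Int.natCast_dvd_natCast.mp h7)
  · exact ⟨P, s, hPprime, hPM, hPs, hPA, hP2⟩

/-- Transfer exact valuation along congruence mod `P²`. -/
lemma transfer_aux (P : ℕ) (x y : ℤ) (hxy : (P:ℤ)^2 ∣ (x - y)) (h1 : (P:ℤ) ∣ y)
    (h2 : ¬ (P:ℤ)^2 ∣ y) : (P:ℤ) ∣ x ∧ ¬ (P:ℤ)^2 ∣ x := by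
  constructor
  · have : x = (x - y) + y := by ring
    rw [this]
    exact dvd_add ((dvd_pow_self (P:ℤ) two_ne_zero).trans hxy) h1
  · intro hc
    have : y = x - (x - y) := by ring
    rw [this] at h2
    exact h2 (dvd_sub hc hxy)

/-- Congruence `q ≡ r [MOD P²]` transfers the valuation conditions from `r` to `q`. -/
lemma poly_transfer_aux (i₀ j₀ P q r : ℕ) (ε u : ℤ) (hqr : q ≡ r [MOD P^2])
    (h1 : (P:ℤ) ∣ ((i₀:ℤ) * (r:ℤ)^j₀ + ε * u))
    (h2 : ¬ (P:ℤ)^2 ∣ ((i₀:ℤ) * (r:ℤ)^j₀ + ε * u)) :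
    (P:ℤ) ∣ ((i₀:ℤ) * (q:ℤ)^j₀ + ε * u) ∧ ¬ (P:ℤ)^2 ∣ ((i₀:ℤ) * (q:ℤ)^j₀ + ε * u) := by
  have hdvd : ((P:ℤ))^2 ∣ ((r:ℤ) - (q:ℤ)) := by
    have := hqr.dvd
    push_cast at this
    exact this
  have hInt : (q:ℤ) ≡ (r:ℤ) [ZMOD ((P:ℤ)^2)] := Int.ModEq.symm (Int.modEq_iff_dvd.mpr (by
    have : (q:ℤ) - (r:ℤ) = -((r:ℤ) - (q:ℤ)) := by ring
    rw [this]
    exact dvd_neg.mpr hdvd))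
  have hcong : ((i₀:ℤ) * (q:ℤ)^j₀ + ε*u) ≡ ((i₀:ℤ) * (r:ℤ)^j₀ + ε*u) [ZMOD ((P:ℤ)^2)] :=
    Int.ModEq.add_right _ (Int.ModEq.mul_left _ (Int.ModEq.pow j₀ hInt))
  exact transfer_aux P _ _ hcong.symm.dvd h1 h2

lemma keyB (m i₀ j₀ d h : ℕ) (hm : 2 ≤ m) (hi₀ : 1 ≤ i₀) (hi₀m : i₀ ≤ m)
    (hj₀ : 2 ≤ j₀) (hj₀m : j₀ ≤ m) (hd : 0 < d) (hcop : Nat.Coprime h d) :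
    ∀ N : ℕ, ∃ D R : ℕ, 0 < D ∧ d ∣ D ∧ R ≡ h [MOD d] ∧ R.Coprime D ∧
      ∀ q : ℕ, q ≡ R [MOD D] → ∀ u : ℕ, 1 ≤ u → u < N → ∀ ε : ℤ, ε = 1 ∨ ε = -1 →
        ∃ P : ℕ, P.Prime ∧ m < P ∧ (P:ℤ) ∣ ((i₀:ℤ) * (q:ℤ)^j₀ + ε * u) ∧
          ¬ (P:ℤ)^2 ∣ ((i₀:ℤ) * (q:ℤ)^j₀ + ε * u) := by
  intro N
  induction N with
  | zero =>
    exact ⟨d, h, hd, dvd_refl d, Nat.ModEq.refl _, hcop,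
      fun q hq u hu huN => absurd huN (by omega)⟩
  | succ N ih =>
    obtain ⟨D, R, hD, hdD, hRh, hRD, hcond⟩ := ih
    by_cases hN : N = 0
    · subst hN
      exact ⟨D, R, hD, hdD, hRh, hRD, fun q hq u hu huN => absurd huN (by omega)⟩
    -- set up moduli
    have hNpos : 1 ≤ N := by omega
    have hfac2 : 2 ≤ m.factorial := by
      calc 2 = Nat.factorial 2 := rfl
      _ ≤ m.factorial := Nat.factorial_le hm
    have hi₀f : i₀ ∣ m.factorial := Nat.dvd_factorial (by omega) hi₀m
    have hj₀f : j₀ ∣ m.factorial := Nat.dvd_factorial (by omega) hj₀m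
    set M₁ := D * m.factorial with hM₁
    have hM₁2 : 2 ≤ M₁ := le_trans hfac2 (Nat.le_mul_of_pos_left _ hD)
    obtain ⟨P₁, r₁, hP₁, hP₁M, hP₁r, hdvd₁, hndvd₁⟩ :=
      keyA i₀ j₀ hi₀ hj₀ M₁ hM₁2 (hi₀f.trans (dvd_mul_left _ _)) (hj₀f.trans (dvd_mul_left _ _))
        N hNpos 1 (Or.inl rfl)
    set M₂ := M₁ * P₁ with hM₂
    have hM₂2 : 2 ≤ M₂ := le_trans hM₁2 (Nat.le_mul_of_pos_right _ hP₁.pos)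
    obtain ⟨P₂, r₂, hP₂, hP₂M, hP₂r, hdvd₂, hndvd₂⟩ :=
      keyA i₀ j₀ hi₀ hj₀ M₂ hM₂2 ((hi₀f.trans (dvd_mul_left _ _)).trans ⟨P₁, rfl⟩)
        ((hj₀f.trans (dvd_mul_left _ _)).trans ⟨P₁, rfl⟩) N hNpos (-1) (Or.inr rfl)
    -- basic non-divisibilities
    have hP₁D : ¬ P₁ ∣ D := fun hc => hP₁M (hc.trans ⟨m.factorial, rfl⟩)
    have hP₂D : ¬ P₂ ∣ D := fun hc => hP₂M ((hc.trans ⟨m.factorial, rfl⟩).trans ⟨P₁, rfl⟩)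
    have hP₂P₁ : ¬ P₂ ∣ P₁ := fun hc => hP₂M (hc.trans ⟨M₁, by ring⟩)
    have hmP₁ : m < P₁ := by
      by_contra hle
      have h1 : P₁ ∣ m.factorial := Nat.dvd_factorial hP₁.pos (by omega)
      exact hP₁M (h1.trans (dvd_mul_left _ _))
    have hmP₂ : m < P₂ := by
      by_contra hle
      have h1 : P₂ ∣ m.factorial := Nat.dvd_factorial hP₂.pos (by omega)
      exact hP₂M ((h1.trans (dvd_mul_left _ _)).trans ⟨P₁, rfl⟩)
    -- coprimality for CRT
    have hco₁ : Nat.Coprime (P₁^2) D :=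
      Nat.Coprime.pow_left 2 ((Nat.Prime.coprime_iff_not_dvd hP₁).mpr hP₁D)
    have hco₂ : Nat.Coprime (P₂^2) (P₁^2 * D) := by
      refine Nat.Coprime.pow_left 2 (Nat.Coprime.mul_right ?_ ?_)
      · exact Nat.Coprime.pow_right 2 ((Nat.Prime.coprime_iff_not_dvd hP₂).mpr hP₂P₁)
      · exact (Nat.Prime.coprime_iff_not_dvd hP₂).mpr hP₂D
    obtain ⟨k₁, hk₁⟩ := Nat.chineseRemainder hco₁ r₁ R
    obtain ⟨k₂, hk₂⟩ := Nat.chineseRemainder hco₂ r₂ k₁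
    refine ⟨P₂^2 * (P₁^2 * D), k₂,
      Nat.mul_pos (pow_pos hP₂.pos 2) (Nat.mul_pos (pow_pos hP₁.pos 2) hD),
      hdD.trans ⟨P₂^2 * P₁^2, by ring⟩, ?_, ?_, ?_⟩
    · -- k₂ ≡ h [MOD d]
      have h1 : k₂ ≡ k₁ [MOD D] := (hk₂.2).of_dvd ⟨P₁^2, by ring⟩
      have h2 : k₂ ≡ R [MOD D] := h1.trans hk₁.2
      exact ((h2.of_dvd hdD).trans hRh)
    · -- coprime
      have hc₂ : Nat.Coprime k₂ (P₂^2) := by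
        refine coprime_of_modEq_aux hk₂.1 ?_
        exact Nat.Coprime.pow_right 2 (((Nat.Prime.coprime_iff_not_dvd hP₂).mpr hP₂r).symm)
      have hc₁ : Nat.Coprime k₂ (P₁^2) := by
        refine coprime_of_modEq_aux ((hk₂.2.of_dvd ⟨D, rfl⟩).trans (hk₁.1.of_dvd (dvd_refl _))) ?_
        exact Nat.Coprime.pow_right 2 (((Nat.Prime.coprime_iff_not_dvd hP₁).mpr hP₁r).symm)
      have hcD : Nat.Coprime k₂ D := by
        refine coprime_of_modEq_aux (((hk₂.2).of_dvd ⟨P₁^2, by ring⟩).trans hk₁.2) hRD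
      exact Nat.Coprime.mul_right hc₂ (Nat.Coprime.mul_right hc₁ hcD)
    · -- main condition
      intro q hq u hu huN ε hε
      have hqk₁ : q ≡ k₁ [MOD P₁^2 * D] :=
        (hq.of_dvd ⟨P₂^2, by ring⟩).trans (hk₂.2)
      by_cases huN' : u < N
      · exact hcond q ((hqk₁.of_dvd ⟨P₁^2, by ring⟩).trans hk₁.2) u hu huN' ε hε
      · have huEq : u = N := by omega
        subst huEq
        rcases hε with rfl | rfl
        · have hqr : q ≡ r₁ [MOD P₁^2] := (hqk₁.of_dvd ⟨D, rfl⟩).trans hk₁.1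
          obtain ⟨ha, hb⟩ := poly_transfer_aux i₀ j₀ P₁ q r₁ 1 u hqr hdvd₁ hndvd₁
          exact ⟨P₁, hP₁, hmP₁, ha, hb⟩
        · have hqr : q ≡ r₂ [MOD P₂^2] := hq.of_dvd ⟨P₁^2 * D, by ring⟩ |>.trans hk₂.1
          obtain ⟨ha, hb⟩ := poly_transfer_aux i₀ j₀ P₂ q r₂ (-1) u hqr hdvd₂ hndvd₂
          exact ⟨P₂, hP₂, hmP₂, ha, hb⟩


/-- Key step in the proof of Theorem 1: with `𝒜 = {(i,j) : 1 ≤ i ≤ m, 2 ≤ j ≤ m}`,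
`(i₀,j₀) ∈ 𝒜` and coprime positive integers `d, h`, for every sufficiently large `N` there
are infinitely many primes `q ≡ h (mod d)` such that for every `1 ≤ u ≤ N−1`, neither
`i₀·q^{j₀} + u` nor `i₀·q^{j₀} − u` is of the form `i·k^j` with `k ≥ 1`, `(i,j) ∈ 𝒜`. -/
theorem gap_primes (m : ℕ) (hm : 2 ≤ m) (i₀ j₀ d h : ℕ)
    (hi₀ : 1 ≤ i₀) (hi₀m : i₀ ≤ m) (hj₀ : 2 ≤ j₀) (hj₀m : j₀ ≤ m)
    (hd : 0 < d) (hh : 0 < h) (hcop : Nat.Coprime d h) :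
    ∃ N₀ : ℕ, ∀ N : ℕ, N₀ ≤ N →
      {q : ℕ | q.Prime ∧ q % d = h % d ∧
        ∀ u : ℕ, 1 ≤ u → u < N →
          ∀ i j k : ℕ, 1 ≤ i → i ≤ m → 2 ≤ j → j ≤ m → 1 ≤ k →
            ((i₀ * q ^ j₀ + u : ℤ) ≠ (i : ℤ) * (k : ℤ) ^ j ∧
             (i₀ * q ^ j₀ - u : ℤ) ≠ (i : ℤ) * (k : ℤ) ^ j)}.Infinite := by
  refine ⟨0, fun N _ => ?_⟩
  obtain ⟨D, R, hD, hdD, hRh, hRD, hcond⟩ :=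
    keyB m i₀ j₀ d h hm hi₀ hi₀m hj₀ hj₀m hd hcop.symm N
  haveI : NeZero D := ⟨hD.ne'⟩
  have hunit : IsUnit ((R : ZMod D)) := (ZMod.isUnit_iff_coprime R D).mpr hRD
  refine (Nat.infinite_setOfPred_prime_and_eq_mod hunit).mono ?_
  rintro q ⟨hqP, hqR⟩
  have hqRmod : q ≡ R [MOD D] := (ZMod.natCast_eq_natCast_iff q R D).mp hqR
  refine ⟨hqP, ?_, ?_⟩
  · exact (hqRmod.of_dvd hdD).trans hRh
  · intro u hu huN i j k hi him hj hjm hk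
    -- a generic contradiction maker
    have key : ∀ ε : ℤ, ε = 1 ∨ ε = -1 →
        ((i₀ : ℤ) * (q : ℤ) ^ j₀ + ε * u) ≠ (i : ℤ) * (k : ℤ) ^ j := by
      intro ε hε heq
      obtain ⟨P, hP, hmP, hPd, hPnd⟩ := hcond q hqRmod u hu huN ε hε
      rw [heq] at hPd hPnd
      have hPZ : Prime (P : ℤ) := Nat.prime_iff_prime_int.mp hP
      rcases hPZ.dvd_mul.mp hPd with hcase | hcase
      · have h1 : P ∣ i := Int.natCast_dvd_natCast.mp hcase
        have h2 : P ≤ i := Nat.le_of_dvd (by omega) h1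
        omega
      · have h1 : (P : ℤ) ∣ (k : ℤ) := hPZ.dvd_of_dvd_pow hcase
        have h2 : (P : ℤ)^2 ∣ (k : ℤ)^2 := pow_dvd_pow_of_dvd h1 2
        have h3 : (k : ℤ)^2 ∣ (k : ℤ)^j := pow_dvd_pow _ (by omega)
        exact hPnd (((h2.trans h3).mul_left _))
    constructor
    · have := key 1 (Or.inl rfl)
      intro heq
      exact this (by rw [← heq]; ring)
    · have := key (-1) (Or.inr rfl)
      intro heq
      exact this (by rw [← heq]; ring)
end
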